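/- arXiv:2007.09406 — 3 statements merged into one kernel-verified Lean document; each statement's English description precedes it below -/
import Mathlib

section
/- Let M be a Puiseux monoid with an approximation (M_i)_{i≥1}, and let x ∈ M. Then there exists j ∈ ℕ such that L_M(x) = ∪_{i≥j} L_{M_i}(x), where L denotes the set of lengths. -/
open scoped NNRat ENNReal

/-- The set of atoms of a Puiseux monoid (additive submonoid of `ℚ≥0`). -/
def PMatoms (M : AddSubmonoid ℚ≥0) : Set ℚ≥0 :=
  {a | a ∈ M ∧ a ≠ 0 ∧ ∀ y ∈ M, ∀ z ∈ M, y ≠ 0 → z ≠ 0 → a ≠ y + z}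

/-- A Puiseux monoid is atomic if it is generated by its atoms. -/
def PMatomic (M : AddSubmonoid ℚ≥0) : Prop :=
  ∀ x ∈ M, x ∈ AddSubmonoid.closure (PMatoms M)

/-- The set of factorizations of `x` in `M`: multisets of atoms summing to `x`. -/
def PMfactorizations (M : AddSubmonoid ℚ≥0) (x : ℚ≥0) : Set (Multiset ℚ≥0) :=
  {s | (∀ a ∈ s, a ∈ PMatoms M) ∧ s.sum = x}

/-- The set of lengths of `x` in `M`. -/
def PMlengths (M : AddSubmonoid ℚ≥0) (x : ℚ≥0) : Set ℕ :=
  Multiset.card '' PMfactorizations M x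

/-- The elasticity of an element: `sup L(x) / inf L(x)` in `ℝ≥0∞`, `1` for `x = 0`. -/
noncomputable def PMelasticityOf (M : AddSubmonoid ℚ≥0) (x : ℚ≥0) : ℝ≥0∞ :=
  if x = 0 then 1
  else sSup ((fun n : ℕ => (n : ℝ≥0∞)) '' PMlengths M x) /
       sInf ((fun n : ℕ => (n : ℝ≥0∞)) '' PMlengths M x)

/-- The elasticity of a Puiseux monoid. -/
noncomputable def PMelasticity (M : AddSubmonoid ℚ≥0) : ℝ≥0∞ :=
  ⨆ x ∈ M, PMelasticityOf M x

/-- The union of sets of lengths containing `n`. -/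
def PMunionOfLengths (M : AddSubmonoid ℚ≥0) (n : ℕ) : Set ℕ :=
  {m | ∃ x : ℚ≥0, n ∈ PMlengths M x ∧ m ∈ PMlengths M x}

/-- The `n`-th local elasticity `ρ_n(M) = sup U_n(M)` in `ℝ≥0∞`. -/
noncomputable def PMlocalElasticity (M : AddSubmonoid ℚ≥0) (n : ℕ) : ℝ≥0∞ :=
  sSup ((fun m : ℕ => (m : ℝ≥0∞)) '' PMunionOfLengths M n)

/-- The set of distances of an element `x` of `M`. -/
def PMdistances (M : AddSubmonoid ℚ≥0) (x : ℚ≥0) : Set ℕ :=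
  {d | 0 < d ∧ ∃ l ∈ PMlengths M x,
    PMlengths M x ∩ Set.Icc l (l + d) = {l, l + d}}

/-- The set of distances (delta set) of `M`. -/
def PMDelta (M : AddSubmonoid ℚ≥0) : Set ℕ :=
  ⋃ x ∈ {y : ℚ≥0 | y ∈ M ∧ y ≠ 0}, PMdistances M x

/-- `(Mi)` is an approximation of `M`: an increasing sequence of atomic submonoids
with union `M` and increasing sets of atoms. -/
def PMapprox (M : AddSubmonoid ℚ≥0) (Mi : ℕ → AddSubmonoid ℚ≥0) : Prop :=
  (∀ i, Mi i ≤ Mi (i + 1)) ∧ (∀ i, PMatomic (Mi i)) ∧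
  (∀ i, PMatoms (Mi i) ⊆ PMatoms (Mi (i + 1))) ∧
  (∀ x, x ∈ M ↔ ∃ i, x ∈ Mi i)

lemma PMapprox.mono {M : AddSubmonoid ℚ≥0} {Mi : ℕ → AddSubmonoid ℚ≥0}
    (h : PMapprox M Mi) : Monotone Mi :=
  monotone_nat_of_le_succ h.1

lemma PMapprox.atoms_mono {M : AddSubmonoid ℚ≥0} {Mi : ℕ → AddSubmonoid ℚ≥0}
    (h : PMapprox M Mi) {i k : ℕ} (hik : i ≤ k) :
    PMatoms (Mi i) ⊆ PMatoms (Mi k) := by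
  induction k, hik using Nat.le_induction with
  | base => exact le_refl _
  | succ n hn ih => exact ih.trans (h.2.2.1 n)

lemma PMapprox.atoms_subset {M : AddSubmonoid ℚ≥0} {Mi : ℕ → AddSubmonoid ℚ≥0}
    (h : PMapprox M Mi) (i : ℕ) : PMatoms (Mi i) ⊆ PMatoms M := by
  rintro a ⟨haM, ha0, hadd⟩
  refine ⟨(h.2.2.2 a).2 ⟨i, haM⟩, ha0, ?_⟩
  intro y hy z hz hy0 hz0 hyz
  obtain ⟨k1, hk1⟩ := (h.2.2.2 y).1 hy
  obtain ⟨k2, hk2⟩ := (h.2.2.2 z).1 hz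
  set k := max i (max k1 k2)
  obtain ⟨_, _, hak⟩ := h.atoms_mono (le_max_left i _) ⟨haM, ha0, hadd⟩
  exact hak y (h.mono ((le_max_left k1 k2).trans (le_max_right i _)) hk1)
    z (h.mono ((le_max_right k1 k2).trans (le_max_right i _)) hk2) hy0 hz0 hyz

lemma PMapprox.atom_of_mem {M : AddSubmonoid ℚ≥0} {Mi : ℕ → AddSubmonoid ℚ≥0}
    (h : PMapprox M Mi) {i : ℕ} {a : ℚ≥0} (ha : a ∈ PMatoms M) (hai : a ∈ Mi i) :
    a ∈ PMatoms (Mi i) := by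
  obtain ⟨_, ha0, hadd⟩ := ha
  exact ⟨hai, ha0, fun y hy z hz =>
    hadd y ((h.2.2.2 y).2 ⟨i, hy⟩) z ((h.2.2.2 z).2 ⟨i, hz⟩)⟩

theorem stmt2 (M : AddSubmonoid ℚ≥0) (Mi : ℕ → AddSubmonoid ℚ≥0)
    (h : PMapprox M Mi) (x : ℚ≥0) (hx : x ∈ M) :
    ∃ j : ℕ, x ∈ Mi j ∧
      PMlengths M x = ⋃ i ∈ Set.Ici j, PMlengths (Mi i) x := by
  obtain ⟨j, hj⟩ := (h.2.2.2 x).1 hx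
  refine ⟨j, hj, Set.Subset.antisymm ?_ ?_⟩
  · rintro n ⟨s, ⟨hs, hsum⟩, rfl⟩
    -- find a level containing all atoms of s
    have hbound : ∃ k, ∀ a ∈ s, a ∈ Mi k := by
      clear hsum
      induction s using Multiset.induction with
      | empty => exact ⟨0, fun a ha => absurd ha (Multiset.notMem_zero a)⟩
      | cons b t ih =>
        obtain ⟨k1, hk1⟩ := ih (fun a ha => hs a (Multiset.mem_cons_of_mem ha))
        obtain ⟨k2, hk2⟩ := (h.2.2.2 b).1 (hs b (Multiset.mem_cons_self b t)).1
        refine ⟨max k1 k2, fun a ha => ?_⟩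
        rcases Multiset.mem_cons.1 ha with rfl | hat
        · exact h.mono (le_max_right k1 k2) hk2
        · exact h.mono (le_max_left k1 k2) (hk1 a hat)
    obtain ⟨k, hk⟩ := hbound
    refine Set.mem_biUnion (Set.mem_Ici.2 (le_max_left j k)) ?_
    exact ⟨s, ⟨fun a ha => h.atom_of_mem (hs a ha)
      (h.mono (le_max_right j k) (hk a ha)), hsum⟩, rfl⟩
  · rintro n hn
    simp only [Set.mem_iUnion] at hn
    obtain ⟨i, _, s, ⟨hs, hsum⟩, rfl⟩ := hn
    exact ⟨s, ⟨fun a ha => h.atoms_subset i (hs a ha), hsum⟩, rfl⟩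
end

section
/- Let M be a Puiseux monoid with an approximation (M_i)_{i≥1}. Then the sequence (ρ(M_i))_{i≥1} is nondecreasing and lim_{i→∞} ρ(M_i) = ρ(M) in ℝ ∪ {∞}. -/
open scoped NNRat ENNReal

/-!
Enlarging a monoid while keeping its atoms can only enlarge sets of lengths, hence elasticities,
so `ρ(M_i)` is nondecreasing and bounded by `ρ(M)`. Conversely, for `x ≠ 0` the elasticity
`ρ_M(x)` is the supremum of the ratios `n / m` of two lengths of `x`; the two factorizations
realizing `n` and `m` use finitely many atoms of `M`, which are all atoms of a single `M_i`.
Hence `ρ(M) = sup_i ρ(M_i)`, the limit of the nondecreasing sequence `ρ(M_i)`.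
-/

section Lengths

variable {N N' : AddSubmonoid ℚ≥0} {x : ℚ≥0}

lemma mem_PMatoms_of_le {a : ℚ≥0} (hNN' : N ≤ N') (ha : a ∈ PMatoms N') (haN : a ∈ N) :
    a ∈ PMatoms N :=
  ⟨haN, ha.2.1, fun y hy z hz => ha.2.2 y (hNN' hy) z (hNN' hz)⟩

lemma mem_of_mem_PMlengths {n : ℕ} (hn : n ∈ PMlengths N x) : x ∈ N := by
  obtain ⟨s, ⟨hs, rfl⟩, -⟩ := hn
  exact N.multiset_sum_mem s fun a ha => (hs a ha).1

lemma PMlengths_mono (hA : PMatoms N ⊆ PMatoms N') (x : ℚ≥0) :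
    PMlengths N x ⊆ PMlengths N' x :=
  Set.image_mono fun _ ⟨hs, hsum⟩ => ⟨fun a ha => hA (hs a ha), hsum⟩

lemma PMelasticityOf_eq_iSup₂ (hx : x ≠ 0) :
    PMelasticityOf N x = ⨆ n ∈ PMlengths N x, ⨆ m ∈ PMlengths N x, (n : ℝ≥0∞) / m := by
  simp only [PMelasticityOf, if_neg hx, sSup_image, sInf_image, div_eq_mul_inv,
    ENNReal.inv_iInf, ENNReal.iSup_mul, ENNReal.mul_iSup]
  exact iSup₂_comm _

lemma one_le_PMelasticity : 1 ≤ PMelasticity N :=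
  le_iSup₂_of_le 0 N.zero_mem (by simp [PMelasticityOf])

lemma div_le_PMelasticity (hx : x ≠ 0) {n m : ℕ} (hn : n ∈ PMlengths N x)
    (hm : m ∈ PMlengths N x) : (n : ℝ≥0∞) / m ≤ PMelasticity N :=
  le_iSup₂_of_le x (mem_of_mem_PMlengths hn) <| by
    rw [PMelasticityOf_eq_iSup₂ hx]
    exact le_iSup₂_of_le n hn (le_iSup₂_of_le m hm le_rfl)

lemma PMelasticity_mono (hNN' : N ≤ N') (hA : PMatoms N ⊆ PMatoms N') :
    PMelasticity N ≤ PMelasticity N' := by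
  refine iSup₂_le fun x hx => ?_
  by_cases hx0 : x = 0
  · exact le_iSup₂_of_le x (hNN' hx) (by simp [PMelasticityOf, hx0])
  rw [PMelasticityOf_eq_iSup₂ hx0]
  exact iSup₂_le fun n hn => iSup₂_le fun m hm =>
    div_le_PMelasticity hx0 (PMlengths_mono hA x hn) (PMlengths_mono hA x hm)

end Lengths

namespace PMapprox

variable {M : AddSubmonoid ℚ≥0} {Mi : ℕ → AddSubmonoid ℚ≥0}

lemma monotone (h : PMapprox M Mi) : Monotone Mi :=
  monotone_nat_of_le_succ h.1

lemma le (h : PMapprox M Mi) (i : ℕ) : Mi i ≤ M :=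
  fun x hx => (h.2.2.2 x).2 ⟨i, hx⟩

lemma exists_finset_subset (h : PMapprox M Mi) {s : Finset ℚ≥0} (hs : (s : Set ℚ≥0) ⊆ M) :
    ∃ i, (s : Set ℚ≥0) ⊆ Mi i := by
  have hdir : Directed (· ⊆ ·) fun i => (Mi i : Set ℚ≥0) := fun i j =>
    ⟨max i j, h.monotone (le_max_left i j), h.monotone (le_max_right i j)⟩
  refine hdir.exists_mem_subset_of_finset_subset_biUnion fun x hx => ?_
  simpa using (h.2.2.2 x).1 (hs hx)

lemma PMatoms_monotone (h : PMapprox M Mi) : Monotone fun i => PMatoms (Mi i) :=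
  monotone_nat_of_le_succ h.2.2.1

-- A splitting `a = y + z` in `M` already happens in some `Mi j` with `j ≥ i`, where `a` is an atom.
lemma PMatoms_subset (h : PMapprox M Mi) (i : ℕ) : PMatoms (Mi i) ⊆ PMatoms M := by
  refine fun a ha => ⟨h.le i ha.1, ha.2.1, fun y hy z hz => ?_⟩
  obtain ⟨j, hj⟩ := h.exists_finset_subset (s := {y, z}) (by simp [Set.pair_subset_iff, hy, hz])
  rw [Finset.coe_pair, Set.pair_subset_iff] at hj
  have haj := h.PMatoms_monotone (le_max_left i j) ha
  exact haj.2.2 y (h.monotone (le_max_right i j) hj.1) z (h.monotone (le_max_right i j) hj.2)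

lemma exists_mem_PMlengths (h : PMapprox M Mi) {x : ℚ≥0} {n m : ℕ}
    (hn : n ∈ PMlengths M x) (hm : m ∈ PMlengths M x) :
    ∃ i, n ∈ PMlengths (Mi i) x ∧ m ∈ PMlengths (Mi i) x := by
  classical
  obtain ⟨s, ⟨hs, hssum⟩, rfl⟩ := hn
  obtain ⟨t, ⟨ht, htsum⟩, rfl⟩ := hm
  obtain ⟨i, hi⟩ := h.exists_finset_subset (s := (s + t).toFinset) fun a ha => by
    simp only [Finset.mem_coe, Multiset.mem_toFinset, Multiset.mem_add] at ha
    exact ha.elim (fun ha => (hs a ha).1) fun ha => (ht a ha).1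
  have hatom {a : ℚ≥0} (hM : a ∈ PMatoms M) (hst : a ∈ s + t) : a ∈ PMatoms (Mi i) :=
    mem_PMatoms_of_le (h.le i) hM (hi (by simpa using hst))
  exact ⟨i, ⟨s, ⟨fun a ha => hatom (hs a ha) (Multiset.mem_add.2 (.inl ha)), hssum⟩, rfl⟩,
    ⟨t, ⟨fun a ha => hatom (ht a ha) (Multiset.mem_add.2 (.inr ha)), htsum⟩, rfl⟩⟩

lemma monotone_PMelasticity (h : PMapprox M Mi) : Monotone fun i => PMelasticity (Mi i) :=
  monotone_nat_of_le_succ fun i => PMelasticity_mono (h.1 i) (h.2.2.1 i)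

lemma iSup_PMelasticity (h : PMapprox M Mi) : ⨆ i, PMelasticity (Mi i) = PMelasticity M := by
  refine le_antisymm (iSup_le fun i => PMelasticity_mono (h.le i) (h.PMatoms_subset i)) ?_
  refine iSup₂_le fun x _ => ?_
  by_cases hx0 : x = 0
  · simpa [PMelasticityOf, hx0] using
      le_iSup_of_le (f := fun i => PMelasticity (Mi i)) 0 one_le_PMelasticity
  rw [PMelasticityOf_eq_iSup₂ hx0]
  refine iSup₂_le fun n hn => iSup₂_le fun m hm => ?_
  obtain ⟨i, hni, hmi⟩ := h.exists_mem_PMlengths hn hm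
  exact le_iSup_of_le i (div_le_PMelasticity hx0 hni hmi)

end PMapprox

theorem stmt4 (M : AddSubmonoid ℚ≥0) (Mi : ℕ → AddSubmonoid ℚ≥0)
    (h : PMapprox M Mi) :
    Monotone (fun i : ℕ => PMelasticity (Mi i)) ∧
    Filter.Tendsto (fun i : ℕ => PMelasticity (Mi i)) Filter.atTop
      (nhds (PMelasticity M)) :=
  ⟨h.monotone_PMelasticity, h.iSup_PMelasticity ▸ tendsto_atTop_iSup h.monotone_PMelasticity⟩
end

section
/- Let r ∈ ℚ with r > 1, r ∉ ℕ, and for i ∈ ℕ let M_i := ⟨{r^{2k} : k ∈ ℕ₀} ∪ {r^{2j−1} : 1 ≤ j ≤ i}⟩. Then (M_i)_{i≥1} is an approximation of S_r = ⟨r^n : n ∈ ℕ₀⟩, and moreover n(r)² − d(r)² ∈ Δ(M_i) for every i ∈ ℕ. In particular, since Δ(S_r) = {n(r) − d(r)}, the inclusion Δ(S_r) ⊆ liminf_i Δ(M_i) can be strict. -/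
open scoped NNRat ENNReal

/-! Write `r = a / b` in lowest terms, so `b ≥ 2` and `a > b`, and describe an element of a
monoid generated by powers of `r` by the multiset of exponents of a factorization. Multiplying by
`b ^ k` turns any sum of powers `r ^ m` with `m ≤ k` into a natural number, while
`c * r ^ (j + k) * b ^ k` is one only if `b ^ j ∣ c`. With `j = 1` this makes every generator
`r ^ n` an atom, so lengths are cardinalities of exponent multisets. In `M_i`, the element
`a² r^(2i) = b² r^(2i+2)` has the lengths `b²` and `a²`: a factorization with an exponent
`M > 2i` cannot use the odd exponent `M - 1`, so taking `j = 2` forces `b²` copies of `r ^ M` and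
hence the factorization `b² · r^(2i+2)`; one without such an exponent has length at least `a²`.
In `S_r`, trading `b` copies of `r ^ (m + 1)` for `a` copies of `r ^ m` lengthens a factorization
by `a - b`; a factorization admitting no trade is a base-`r` representation, unique by the case
`j = 1`, hence of maximal length. So every distance of `S_r` is at most `a - b < a² - b²`. -/

open Multiset

lemma eq_zero_or_mem_or_eq_add_of_mem_closure {A : Set ℚ≥0} {x : ℚ≥0}
    (hx : x ∈ AddSubmonoid.closure A) :
    x = 0 ∨ x ∈ A ∨
      ∃ y ∈ AddSubmonoid.closure A, ∃ z ∈ AddSubmonoid.closure A,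
        y ≠ 0 ∧ z ≠ 0 ∧ x = y + z := by
  induction hx using AddSubmonoid.closure_induction with
  | mem x hx => exact .inr (.inl hx)
  | zero => exact .inl rfl
  | add y z hy hz ihy ihz =>
    rcases eq_or_ne y 0 with rfl | hy0
    · simpa using ihz
    rcases eq_or_ne z 0 with rfl | hz0
    · simpa using ihy
    exact .inr (.inr ⟨y, hy, z, hz, hy0, hz0, rfl⟩)

lemma PMatoms_closure_subset (A : Set ℚ≥0) : PMatoms (AddSubmonoid.closure A) ⊆ A := by
  rintro x ⟨hx, hx0, hirr⟩
  rcases eq_zero_or_mem_or_eq_add_of_mem_closure hx with h | h | ⟨y, hy, z, hz, hy0, hz0, rfl⟩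
  · exact absurd h hx0
  · exact h
  · exact absurd rfl (hirr y hy z hz hy0 hz0)

lemma PMatomic_closure {A : Set ℚ≥0} (h : PMatoms (AddSubmonoid.closure A) = A) :
    PMatomic (AddSubmonoid.closure A) :=
  fun x hx => by rwa [h]

lemma mem_PMdistances_iff {M : AddSubmonoid ℚ≥0} {x : ℚ≥0} {d : ℕ} :
    d ∈ PMdistances M x ↔ 0 < d ∧ ∃ l ∈ PMlengths M x, l + d ∈ PMlengths M x ∧
      ∀ n ∈ PMlengths M x, n ∉ Set.Ioo l (l + d) := by
  refine and_congr_right fun hd => exists_congr fun l => and_congr_right fun hl =>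
    ⟨fun h => ?_, fun ⟨hld, hgap⟩ => ?_⟩
  · have hmem : ∀ n ∈ PMlengths M x, l ≤ n → n ≤ l + d → n = l ∨ n = l + d := by
      intro n hn h1 h2
      have : n ∈ PMlengths M x ∩ Set.Icc l (l + d) := ⟨hn, h1, h2⟩
      simpa [h] using this
    have hld : l + d ∈ PMlengths M x ∩ Set.Icc l (l + d) := by
      rw [h]
      exact Or.inr rfl
    refine ⟨hld.1, fun n hn hI => ?_⟩
    rcases hmem n hn hI.1.le hI.2.le with rfl | rfl
    · exact hI.1.ne rfl
    · exact hI.2.ne rfl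
  · ext n
    simp only [Set.mem_inter_iff, Set.mem_Icc, Set.mem_insert_iff, Set.mem_singleton_iff]
    constructor
    · rintro ⟨hn, h1, h2⟩
      have := hgap n hn
      simp only [Set.mem_Ioo, not_and, not_lt] at this
      omega
    · rintro (rfl | rfl)
      · exact ⟨hl, le_rfl, by omega⟩
      · exact ⟨hld, by omega, le_rfl⟩

lemma Multiset.exists_map_eq_of_forall_mem_image {α β : Type*} {f : α → β} {P : Set α}
    {s : Multiset β} (hs : ∀ b ∈ s, b ∈ f '' P) :
    ∃ e : Multiset α, (∀ a ∈ e, a ∈ P) ∧ e.map f = s := by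
  induction s using Multiset.induction_on with
  | empty => exact ⟨0, by simp, rfl⟩
  | cons b s ih =>
    obtain ⟨a, ha, rfl⟩ := hs b (mem_cons_self b s)
    obtain ⟨e, he, rfl⟩ := ih fun b hb => hs b (mem_cons_of_mem hb)
    exact ⟨a ::ₘ e, by simpa [ha] using he, by simp⟩

lemma Multiset.replicate_count_add_filter_ne {α : Type*} [DecidableEq α] (s : Multiset α)
    (a : α) : replicate (s.count a) a + s.filter (· ≠ a) = s := by
  rw [← filter_eq']
  exact filter_add_not _ s

namespace NNRat

variable {r : ℚ≥0}

lemma den_lt_num (hr : 1 < r) : r.den < r.num := by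
  simpa using NNRat.lt_def.1 hr

lemma num_sub_den_lt_num_sq_sub_den_sq (hr : 1 < r) :
    r.num - r.den < r.num ^ 2 - r.den ^ 2 := by
  have := NNRat.den_lt_num hr
  have := r.den_pos
  have : 2 * (r.num - r.den) ≤ (r.num + r.den) * (r.num - r.den) :=
    Nat.mul_le_mul_right _ (by omega)
  rw [Nat.sq_sub_sq]
  omega

end NNRat

def powSum (r : ℚ≥0) (e : Multiset ℕ) : ℚ≥0 := (e.map (r ^ ·)).sum

section powSum

variable {r : ℚ≥0} {e f : Multiset ℕ}

@[simp] lemma powSum_zero : powSum r 0 = 0 := rfl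

@[simp] lemma powSum_add : powSum r (e + f) = powSum r e + powSum r f := by
  simp [powSum]

@[simp] lemma powSum_singleton (m : ℕ) : powSum r {m} = r ^ m := by
  simp [powSum]

@[simp] lemma powSum_cons (m : ℕ) : powSum r (m ::ₘ e) = r ^ m + powSum r e := by
  simp [powSum]

@[simp] lemma powSum_replicate (c m : ℕ) : powSum r (replicate c m) = c * r ^ m := by
  simp [powSum]

lemma powSum_eq_zero_iff (hr : r ≠ 0) : powSum r e = 0 ↔ e = 0 := by
  simp [powSum, Multiset.sum_eq_zero_iff, hr, Multiset.eq_zero_iff_forall_notMem]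

lemma pow_le_powSum {m : ℕ} (hm : m ∈ e) : r ^ m ≤ powSum r e :=
  Multiset.le_sum_of_mem (mem_map_of_mem _ hm)

lemma card_le_powSum (hr : 1 ≤ r) : (card e : ℚ≥0) ≤ powSum r e := by
  have := Multiset.card_nsmul_le_sum (s := e.map (r ^ ·)) (a := 1)
    (by simpa using fun m _ => one_le_pow₀ hr)
  rwa [card_map, nsmul_one] at this

lemma powSum_le_card_mul (hr : 1 ≤ r) {k : ℕ} (he : ∀ m ∈ e, m ≤ k) :
    powSum r e ≤ card e * r ^ k := by
  simpa [powSum] using Multiset.sum_le_card_nsmul (e.map (r ^ ·)) (r ^ k)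
    (by simpa using fun m hm => pow_le_pow_right₀ hr (he m hm))

lemma mem_closure_pow_image_iff (P : Set ℕ) {x : ℚ≥0} :
    x ∈ AddSubmonoid.closure ((r ^ ·) '' P) ↔
      ∃ e : Multiset ℕ, (∀ m ∈ e, m ∈ P) ∧ powSum r e = x := by
  constructor
  · intro hx
    induction hx using AddSubmonoid.closure_induction with
    | mem x hx =>
      obtain ⟨m, hm, rfl⟩ := hx
      exact ⟨{m}, by simpa using hm, by simp⟩
    | zero => exact ⟨0, by simp, rfl⟩
    | add x y _ _ hx hy =>
      obtain ⟨e, he, rfl⟩ := hx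
      obtain ⟨f, hf, rfl⟩ := hy
      exact ⟨e + f, fun m hm => (mem_add.1 hm).elim (he m) (hf m), powSum_add⟩
  · rintro ⟨e, he, rfl⟩
    refine AddSubmonoid.multiset_sum_mem _ _ fun q hq => ?_
    obtain ⟨m, hm, rfl⟩ := mem_map.1 hq
    exact AddSubmonoid.subset_closure ⟨m, he m hm, rfl⟩

lemma pow_mul_den_pow_of_le {m k : ℕ} (hmk : m ≤ k) :
    r ^ m * (r.den : ℚ≥0) ^ k = ((r.num ^ m * r.den ^ (k - m) : ℕ) : ℚ≥0) := by
  obtain ⟨k, rfl⟩ := Nat.exists_eq_add_of_le hmk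
  rw [pow_add, ← mul_assoc, ← mul_pow, r.mul_den_eq_num, Nat.add_sub_cancel_left]
  push_cast
  rfl

lemma exists_powSum_mul_den_pow_eq_natCast {k : ℕ} (he : ∀ m ∈ e, m ≤ k) :
    ∃ n : ℕ, powSum r e * r.den ^ k = n := by
  induction e using Multiset.induction_on with
  | empty => exact ⟨0, by simp⟩
  | cons m e ih =>
    obtain ⟨n, hn⟩ := ih fun m hm => he m (mem_cons_of_mem hm)
    refine ⟨r.num ^ m * r.den ^ (k - m) + n, ?_⟩
    rw [powSum_cons, add_mul, hn, pow_mul_den_pow_of_le (he m (mem_cons_self m e))]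
    push_cast
    rfl

/-- Clearing denominators turns `c r^(j+k) + y = z` into `c a^(j+k) + m b^j = n b^j`
for `r = a / b`, and `b` is coprime to `a`. -/
lemma den_pow_dvd_of_mul_pow_add_eq {c j k m n : ℕ} {y z : ℚ≥0} (hy : y * r.den ^ k = m)
    (hz : z * r.den ^ k = n) (h : c * r ^ (j + k) + y = z) : r.den ^ j ∣ c := by
  have hnat : c * r.num ^ (j + k) + m * r.den ^ j = n * r.den ^ j := by
    apply Nat.cast_injective (R := ℚ≥0)
    calc ((c * r.num ^ (j + k) + m * r.den ^ j : ℕ) : ℚ≥0)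
        = (c * r ^ (j + k) + y) * r.den ^ (j + k) := by
          push_cast
          rw [← hy, ← r.mul_den_eq_num]
          ring
      _ = ((n * r.den ^ j : ℕ) : ℚ≥0) := by
          rw [h, pow_add, mul_comm (r.den ^ j : ℚ≥0), ← mul_assoc, hz]
          push_cast
          ring
  have hdvd : r.den ^ j ∣ c * r.num ^ (j + k) :=
    (Nat.dvd_add_left (dvd_mul_left _ m)).1 (hnat ▸ dvd_mul_left _ n)
  exact ((r.coprime_num_den.pow _ _).symm).dvd_of_dvd_mul_right hdvd

end powSum

section Atoms

variable {r : ℚ≥0}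

lemma pow_mem_PMatoms_closure (hr : 1 < r) (hden : r.den ≠ 1) {P : Set ℕ} {n : ℕ}
    (hn : n ∈ P) : r ^ n ∈ PMatoms (AddSubmonoid.closure ((r ^ ·) '' P)) := by
  have hr0 : 0 < r := zero_lt_one.trans hr
  refine ⟨AddSubmonoid.subset_closure ⟨n, hn, rfl⟩, (pow_pos hr0 n).ne', ?_⟩
  rintro y hy z hz hy0 hz0 hyz
  obtain ⟨e, -, rfl⟩ := (mem_closure_pow_image_iff P).1 hy
  obtain ⟨f, -, rfl⟩ := (mem_closure_pow_image_iff P).1 hz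
  have hlt : ∀ m ∈ e + f, m < n := by
    intro m hm
    refine (pow_lt_pow_iff_right₀ hr).1 ?_
    rw [hyz]
    rcases mem_add.1 hm with hm | hm
    · exact (pow_le_powSum hm).trans_lt (lt_add_of_pos_right _ (pos_iff_ne_zero.2 hz0))
    · exact (pow_le_powSum hm).trans_lt (lt_add_of_pos_left _ (pos_iff_ne_zero.2 hy0))
  obtain ⟨m, hm⟩ := exists_mem_of_ne_zero fun he : e = 0 => hy0 (by simp [he])
  obtain ⟨k, rfl⟩ := Nat.exists_eq_add_of_lt (hlt m (mem_add.2 (.inl hm)))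
  obtain ⟨N, hN⟩ := exists_powSum_mul_den_pow_eq_natCast (r := r) (k := m + k)
    fun m' hm' => Nat.lt_succ_iff.1 (hlt m' hm')
  have := den_pow_dvd_of_mul_pow_add_eq (c := 1) (j := 1) (y := 0) (m := 0) (by simp) hN
    (by rw [powSum_add, ← hyz, add_comm 1]; simp)
  exact hden (Nat.dvd_one.1 (by simpa using this))

lemma PMatoms_closure_pow_image (hr : 1 < r) (hden : r.den ≠ 1) (P : Set ℕ) :
    PMatoms (AddSubmonoid.closure ((r ^ ·) '' P)) = (r ^ ·) '' P := by
  refine (PMatoms_closure_subset _).antisymm ?_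
  rintro _ ⟨n, hn, rfl⟩
  exact pow_mem_PMatoms_closure hr hden hn

lemma mem_PMlengths_closure_pow_image_iff (hr : 1 < r) (hden : r.den ≠ 1) {P : Set ℕ}
    {x : ℚ≥0} {l : ℕ} :
    l ∈ PMlengths (AddSubmonoid.closure ((r ^ ·) '' P)) x ↔
      ∃ e : Multiset ℕ, (∀ m ∈ e, m ∈ P) ∧ powSum r e = x ∧ card e = l := by
  simp only [PMlengths, PMfactorizations, PMatoms_closure_pow_image hr hden, Set.mem_image,
    Set.mem_ofPred_eq]
  constructor
  · rintro ⟨s, ⟨hs, rfl⟩, rfl⟩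
    obtain ⟨e, he, rfl⟩ := Multiset.exists_map_eq_of_forall_mem_image hs
    exact ⟨e, he, rfl, (card_map _ _).symm⟩
  · rintro ⟨e, he, rfl, rfl⟩
    refine ⟨e.map (r ^ ·), ⟨fun q hq => ?_, rfl⟩, card_map _ _⟩
    obtain ⟨m, hm, rfl⟩ := mem_map.1 hq
    exact ⟨m, he m hm, rfl⟩

lemma PMapprox_closure_pow_image (hr : 1 < r) (hden : r.den ≠ 1) {P : ℕ → Set ℕ}
    (hmono : ∀ i, P i ⊆ P (i + 1)) (hcover : ∀ k, ∃ i, Set.Iic k ⊆ P i) :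
    PMapprox (AddSubmonoid.closure ((r ^ ·) '' Set.univ))
      (fun i => AddSubmonoid.closure ((r ^ ·) '' P i)) := by
  refine ⟨fun i => AddSubmonoid.closure_mono (Set.image_mono (hmono i)),
    fun i => PMatomic_closure (PMatoms_closure_pow_image hr hden _), fun i => ?_, fun x => ?_⟩
  · simp only [PMatoms_closure_pow_image hr hden]
    exact Set.image_mono (hmono i)
  · refine ⟨fun hx => ?_, fun ⟨i, hx⟩ =>
      AddSubmonoid.closure_mono (Set.image_mono (Set.subset_univ _)) hx⟩
    obtain ⟨e, -, rfl⟩ := (mem_closure_pow_image_iff _).1 hx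
    obtain ⟨i, hi⟩ := hcover e.sup
    exact ⟨i, (mem_closure_pow_image_iff _).2 ⟨e, fun m hm => hi (le_sup hm), rfl⟩⟩

end Atoms

section BaseRepr

variable {r : ℚ≥0}

/-- The exponent multiset records the base-`r` digits of its sum: no `r.den` copies of a power
`r ^ (m + 1)` are left that could be traded for `r.num` copies of `r ^ m`. -/
def IsBaseRepr (r : ℚ≥0) (e : Multiset ℕ) : Prop := ∀ m, e.count (m + 1) < r.den

lemma exists_powSum_eq_of_den_le_count {e : Multiset ℕ} {m : ℕ}
    (h : r.den ≤ e.count (m + 1)) :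
    ∃ e', powSum r e' = powSum r e ∧ card e' + r.den = card e + r.num := by
  obtain ⟨f, rfl⟩ : ∃ f, e = replicate r.den (m + 1) + f :=
    ⟨_, (add_tsub_cancel_of_le (le_count_iff_replicate_le.1 h)).symm⟩
  refine ⟨replicate r.num m + f, ?_, by simp; omega⟩
  simp only [powSum_add, powSum_replicate]
  rw [pow_succ, ← r.mul_den_eq_num]
  ring

lemma count_eq_of_powSum_eq {e f : Multiset ℕ} (he : IsBaseRepr r e) (hf : IsBaseRepr r f)
    {M : ℕ} (heM : ∀ m ∈ e, m ≤ M + 1) (hfM : ∀ m ∈ f, m ≤ M + 1)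
    (h : powSum r e = powSum r f) : e.count (M + 1) = f.count (M + 1) := by
  classical
  wlog hle : f.count (M + 1) ≤ e.count (M + 1) generalizing e f
  · exact (this hf he hfM heM h.symm (le_of_not_ge hle)).symm
  obtain ⟨d, hd⟩ := Nat.exists_eq_add_of_le hle
  have hbelow : ∀ {g : Multiset ℕ}, (∀ m ∈ g, m ≤ M + 1) →
      ∀ m ∈ g.filter (· ≠ M + 1), m ≤ M :=
    fun hg m hm => by have := hg m (mem_of_mem_filter hm); have := (mem_filter.1 hm).2; omega
  obtain ⟨Ne, hNe⟩ := exists_powSum_mul_den_pow_eq_natCast (r := r) (hbelow heM)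
  obtain ⟨Nf, hNf⟩ := exists_powSum_mul_den_pow_eq_natCast (r := r) (hbelow hfM)
  have hsum : (d : ℚ≥0) * r ^ (1 + M) + powSum r (e.filter (· ≠ M + 1)) =
      powSum r (f.filter (· ≠ M + 1)) := by
    rw [← replicate_count_add_filter_ne e (M + 1), ← replicate_count_add_filter_ne f (M + 1),
      powSum_add, powSum_add, powSum_replicate, powSum_replicate, hd] at h
    rw [← add_left_cancel_iff (a := (f.count (M + 1) : ℚ≥0) * r ^ (M + 1)), ← h]
    push_cast
    ring_nf
  have hdvd := den_pow_dvd_of_mul_pow_add_eq hNe hNf hsum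
  have := Nat.eq_zero_of_dvd_of_lt (pow_one r.den ▸ hdvd) (by have := he M; omega)
  omega

lemma IsBaseRepr.eq_of_powSum_eq {e f : Multiset ℕ} (he : IsBaseRepr r e)
    (hf : IsBaseRepr r f) (h : powSum r e = powSum r f) : e = f := by
  classical
  suffices ∀ M (e f : Multiset ℕ), IsBaseRepr r e → IsBaseRepr r f →
      (∀ m ∈ e, m ≤ M) → (∀ m ∈ f, m ≤ M) → powSum r e = powSum r f → e = f from
    this (e + f).sup e f he hf (fun m hm => le_sup (mem_add.2 (.inl hm)))
      (fun m hm => le_sup (mem_add.2 (.inr hm))) h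
  intro M
  induction M with
  | zero =>
    intro e f _ _ heM hfM h
    rw [eq_replicate_card.2 fun m hm => Nat.le_zero.1 (heM m hm),
      eq_replicate_card.2 fun m hm => Nat.le_zero.1 (hfM m hm)] at h ⊢
    simp only [powSum_replicate, pow_zero, mul_one, Nat.cast_inj] at h
    rw [h]
  | succ M ih =>
    intro e f he hf heM hfM h
    have hcount := count_eq_of_powSum_eq he hf heM hfM h
    have hfilter : e.filter (· ≠ M + 1) = f.filter (· ≠ M + 1) := by
      refine ih _ _ (fun m => (count_le_of_le _ (filter_le _ e)).trans_lt (he m))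
        (fun m => (count_le_of_le _ (filter_le _ f)).trans_lt (hf m))
        (fun m hm => ?_) (fun m hm => ?_) ?_
      · have := heM m (mem_of_mem_filter hm); have := (mem_filter.1 hm).2; omega
      · have := hfM m (mem_of_mem_filter hm); have := (mem_filter.1 hm).2; omega
      · rw [← replicate_count_add_filter_ne e (M + 1),
          ← replicate_count_add_filter_ne f (M + 1), powSum_add, powSum_add, hcount] at h
        exact add_left_cancel h
    rw [← replicate_count_add_filter_ne e (M + 1), ← replicate_count_add_filter_ne f (M + 1),
      hcount, hfilter]

/-- Trading only lengthens a factorization, must stop since lengths are bounded by the sum, and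
can only stop at the unique base representation. -/
lemma IsBaseRepr.card_le_of_powSum_eq (hr : 1 < r) {e g : Multiset ℕ} (he : IsBaseRepr r e)
    (h : powSum r g = powSum r e) : card g ≤ card e := by
  induction hk : ⌈powSum r e⌉₊ - card g using Nat.strong_induction_on generalizing g with
  | _ k ih =>
  by_cases hg : IsBaseRepr r g
  · rw [hg.eq_of_powSum_eq he h]
  obtain ⟨m, hm⟩ : ∃ m, r.den ≤ g.count (m + 1) := by simpa [IsBaseRepr] using hg
  obtain ⟨g', hg'sum, hg'card⟩ := exists_powSum_eq_of_den_le_count hm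
  have hbound : card g' ≤ ⌈powSum r e⌉₊ := by
    rw [← Nat.cast_le (α := ℚ≥0), ← h, ← hg'sum]
    exact (card_le_powSum hr.le).trans (Nat.le_ceil _)
  have := NNRat.den_lt_num hr
  exact le_trans (by omega) (ih _ (by omega) (hg'sum.trans h) rfl)

lemma le_num_sub_den_of_mem_PMDelta (hr : 1 < r) (hden : r.den ≠ 1) {d : ℕ}
    (hd : d ∈ PMDelta (AddSubmonoid.closure ((r ^ ·) '' Set.univ))) : d ≤ r.num - r.den := by
  obtain ⟨x, -, hdx⟩ := Set.mem_iUnion₂.1 hd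
  obtain ⟨hd0, l, hl, hld, hgap⟩ := mem_PMdistances_iff.1 hdx
  simp only [mem_PMlengths_closure_pow_image_iff hr hden, Set.mem_univ, implies_true,
    true_and] at hl hld hgap
  obtain ⟨e, hex, rfl⟩ := hl
  obtain ⟨g, hgx, hg⟩ := hld
  by_cases he : IsBaseRepr r e
  · have := he.card_le_of_powSum_eq hr (hgx.trans hex.symm)
    omega
  obtain ⟨m, hm⟩ : ∃ m, r.den ≤ e.count (m + 1) := by simpa [IsBaseRepr] using he
  obtain ⟨e', he'sum, he'card⟩ := exists_powSum_eq_of_den_le_count hm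
  have hlong := hgap _ ⟨e', he'sum.trans hex, rfl⟩
  simp only [Set.mem_Ioo, not_and, not_lt] at hlong
  have := NNRat.den_lt_num hr
  omega

end BaseRepr

lemma union_pow_eq_image_even_or_lt (r : ℚ≥0) (i : ℕ) :
    {q : ℚ≥0 | ∃ k : ℕ, q = r ^ (2 * k)} ∪
      {q : ℚ≥0 | ∃ j : ℕ, 1 ≤ j ∧ j ≤ i ∧ q = r ^ (2 * j - 1)} =
    (r ^ ·) '' {n | Even n ∨ n < 2 * i} := by
  ext q
  simp only [Set.mem_union, Set.mem_ofPred_eq, Set.mem_image]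
  constructor
  · rintro (⟨k, rfl⟩ | ⟨j, hj1, hji, rfl⟩)
    · exact ⟨2 * k, .inl (even_two_mul k), rfl⟩
    · exact ⟨2 * j - 1, .inr (by omega), rfl⟩
  · rintro ⟨n, hn, rfl⟩
    rcases Nat.even_or_odd' n with ⟨k, rfl | rfl⟩
    · exact .inl ⟨k, rfl⟩
    · refine .inr ⟨k + 1, by omega, ?_, by congr 1⟩
      rcases hn with hn | hn
      · exact absurd hn (Nat.not_even_iff_odd.2 (odd_two_mul_add_one k))
      · omega

section EvenOrBelow

variable {r : ℚ≥0}

lemma card_eq_den_sq_or_num_sq_le (hr : 1 < r) {i : ℕ} {e : Multiset ℕ}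
    (he : ∀ m ∈ e, Even m ∨ m < 2 * i) (h : powSum r e = r.num ^ 2 * r ^ (2 * i)) :
    card e = r.den ^ 2 ∨ r.num ^ 2 ≤ card e := by
  classical
  have hr0 : 0 < r := zero_lt_one.trans hr
  have hnum : 0 < r.num := NNRat.num_pos.2 hr0
  obtain ⟨M, hMe, hM⟩ : ∃ M ∈ e, ∀ m ∈ e, m ≤ M := exists_max_image id (s := e)
    fun h0 => by simp [h0, eq_comm (a := (0 : ℚ≥0)), hnum.ne', hr0.ne'] at h
  rcases le_or_gt M (2 * i) with hle | hlt
  · right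
    have := powSum_le_card_mul hr.le fun m hm => (hM m hm).trans hle
    rw [h] at this
    exact_mod_cast le_of_mul_le_mul_right this (pow_pos hr0 _)
  left
  have hMeven : Even M := (he M hMe).resolve_right (by omega)
  obtain ⟨k, rfl⟩ : ∃ k, M = k + 2 := ⟨M - 2, by rcases hMeven with ⟨t, ht⟩; omega⟩
  have hik : 2 * i ≤ k := by rcases hMeven with ⟨t, ht⟩; omega
  set c := e.count (k + 2)
  set f := e.filter (· ≠ k + 2)
  have hsplit : powSum r e = c * r ^ (k + 2) + powSum r f := by
    rw [← powSum_replicate, ← powSum_add, replicate_count_add_filter_ne]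
  -- the exponent `k + 1` is odd and above `2 * i`, so it is not allowed
  have hf : ∀ m ∈ f, m ≤ k := by
    intro m hm
    obtain ⟨hme, hmne⟩ := mem_filter.1 hm
    have := hM m hme
    rcases he m hme with ⟨t, ht⟩ | hlt' <;> rcases hMeven with ⟨s, hs⟩ <;> omega
  obtain ⟨N, hN⟩ := exists_powSum_mul_den_pow_eq_natCast (r := r) hf
  obtain ⟨N', hN'⟩ := exists_powSum_mul_den_pow_eq_natCast (r := r) (k := k)
    (e := replicate (r.num ^ 2) (2 * i)) fun m hm => by
      rw [eq_of_mem_replicate hm]; exact hik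
  have hdvd : r.den ^ 2 ∣ c := den_pow_dvd_of_mul_pow_add_eq hN hN' (by
    rw [add_comm 2 k, ← hsplit, h, powSum_replicate]; push_cast; rfl)
  have hc : r.den ^ 2 ≤ c := Nat.le_of_dvd (count_pos.2 hMe) hdvd
  have hx : (r.num : ℚ≥0) ^ 2 * r ^ (2 * i) = r.den ^ 2 * r ^ (2 * i + 2) := by
    rw [← r.mul_den_eq_num]; ring
  have hupper : c * r ^ (k + 2) + powSum r f ≤ r.den ^ 2 * r ^ (k + 2) := by
    rw [← hsplit, h, hx]
    gcongr
    exact hr.le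
  have hlower : (r.den ^ 2 : ℚ≥0) * r ^ (k + 2) ≤ c * r ^ (k + 2) := by
    gcongr
    exact_mod_cast hc
  have hf0 : f = 0 := (powSum_eq_zero_iff hr0.ne').1
    (le_zero_iff.1 ((add_le_iff_nonpos_right _).1 (hupper.trans hlower)))
  have hc' : c ≤ r.den ^ 2 := by
    exact_mod_cast le_of_mul_le_mul_right (le_self_add.trans hupper) (pow_pos hr0 _)
  have hcard : card e = c + card f := by
    rw [← card_replicate c (k + 2), ← card_add, replicate_count_add_filter_ne]
  rw [hcard, hf0, card_zero]
  omega

lemma num_sq_sub_den_sq_mem_PMDelta (hr : 1 < r) (hden : r.den ≠ 1) (i : ℕ) :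
    r.num ^ 2 - r.den ^ 2 ∈
      PMDelta (AddSubmonoid.closure ((r ^ ·) '' {n | Even n ∨ n < 2 * i})) := by
  have hr0 : 0 < r := zero_lt_one.trans hr
  have hsq : r.den ^ 2 < r.num ^ 2 := Nat.pow_lt_pow_left (NNRat.den_lt_num hr) two_ne_zero
  have hx : powSum r (replicate (r.num ^ 2) (2 * i)) =
      powSum r (replicate (r.den ^ 2) (2 * i + 2)) := by
    simp only [powSum_replicate]
    push_cast
    rw [← r.mul_den_eq_num]
    ring
  refine Set.mem_biUnion (x := powSum r (replicate (r.num ^ 2) (2 * i))) ⟨?_, ?_⟩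
    (mem_PMdistances_iff.2 ⟨by omega, r.den ^ 2, ?_, ?_, ?_⟩)
  · exact (mem_closure_pow_image_iff _).2
      ⟨_, fun m hm => .inl (eq_of_mem_replicate hm ▸ even_two_mul i), rfl⟩
  · simp [hr0.ne', (NNRat.num_pos.2 hr0).ne']
  · refine (mem_PMlengths_closure_pow_image_iff hr hden).2
      ⟨_, fun m hm => .inl ?_, hx.symm, card_replicate _ _⟩
    rw [eq_of_mem_replicate hm]
    exact ⟨i + 1, by ring⟩
  · rw [Nat.add_sub_cancel' hsq.le]
    exact (mem_PMlengths_closure_pow_image_iff hr hden).2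
      ⟨_, fun m hm => .inl (eq_of_mem_replicate hm ▸ even_two_mul i), rfl, card_replicate _ _⟩
  · rintro n hn ⟨hlo, hhi⟩
    obtain ⟨e, he, hex, rfl⟩ := (mem_PMlengths_closure_pow_image_iff hr hden).1 hn
    rw [powSum_replicate] at hex
    rcases card_eq_den_sq_or_num_sq_le hr he (by exact_mod_cast hex) with h | h <;> omega

end EvenOrBelow

theorem stmt16 (r : ℚ≥0) (h1 : 1 < r) (hn : ∀ n : ℕ, r ≠ (n : ℚ≥0))
    (S : AddSubmonoid ℚ≥0)
    (hS : S = AddSubmonoid.closure {q : ℚ≥0 | ∃ n : ℕ, q = r ^ n})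
    (Mi : ℕ → AddSubmonoid ℚ≥0)
    (hMi : ∀ i, Mi i = AddSubmonoid.closure
      ({q : ℚ≥0 | ∃ k : ℕ, q = r ^ (2 * k)} ∪
       {q : ℚ≥0 | ∃ j : ℕ, 1 ≤ j ∧ j ≤ i ∧ q = r ^ (2 * j - 1)})) :
    PMapprox S (fun i => Mi (i + 1)) ∧
    (∀ i ≥ 1, r.num ^ 2 - r.den ^ 2 ∈ PMDelta (Mi i)) ∧
    PMDelta S ≠ ⋃ i ∈ Set.Ici 1, ⋂ j ∈ Set.Ici i, PMDelta (Mi j) := by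
  have hden : r.den ≠ 1 := fun h => hn r.num (by rw [← r.mul_den_eq_num, h]; simp)
  have hS' : S = AddSubmonoid.closure ((r ^ ·) '' Set.univ) := by
    rw [hS, Set.image_univ]
    congr 1
    ext q
    simp [eq_comm]
  have hMi' : ∀ i, Mi i = AddSubmonoid.closure ((r ^ ·) '' {n | Even n ∨ n < 2 * i}) :=
    fun i => by rw [hMi, union_pow_eq_image_even_or_lt]
  have hΔ : ∀ i, r.num ^ 2 - r.den ^ 2 ∈ PMDelta (Mi i) :=
    fun i => hMi' i ▸ num_sq_sub_den_sq_mem_PMDelta h1 hden i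
  refine ⟨?_, fun i _ => hΔ i, fun hS_eq => ?_⟩
  · simp only [hS', hMi']
    exact PMapprox_closure_pow_image h1 hden (fun i n hn => hn.imp_right (by omega))
      fun k => ⟨k, fun n hn => .inr (by simp only [Set.mem_Iic] at hn; omega)⟩
  · have hmem : r.num ^ 2 - r.den ^ 2 ∈ PMDelta S :=
      hS_eq ▸ Set.mem_biUnion Set.self_mem_Ici (Set.mem_iInter₂.2 fun j _ => hΔ j)
    rw [hS'] at hmem
    exact (NNRat.num_sub_den_lt_num_sq_sub_den_sq h1).not_ge
      (le_num_sub_den_of_mem_PMDelta h1 hden hmem)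
end
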